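/- arXiv:1412.0276 — 2 statements merged into one kernel-verified Lean document; each statement's English description precedes it below -/
import Mathlib

section
/- Let $\varepsilon>0$, $\lambda\in\mathbb{R}$ and let $P_\lambda=\begin{pmatrix}-\varepsilon & -\lambda\\ \lambda & \varepsilon\end{pmatrix}$. There exists a nonzero solution $f:\mathbb{R}\to\mathbb{R}^2$ of $f'(t)=P_\lambda f(t)$ with $f(0)=f(1)$ if and only if either $\lambda=\pm\varepsilon$, or $\lambda=\pm\sqrt{(2\pi n)^2+\varepsilon^2}$ for some nonzero integer $n$. -/
/-!
Each component `u` of a solution satisfies `u'' = (ε² - λ²) u`, since `P_λ` is traceless with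
`det P_λ = λ² - ε²`. For a complex square root `s` of `ε² - λ²`, `z = u' + s u` solves `z' = s z`,
so `z(t) = z(0) e^{st}` and periodicity forces `z ≡ 0` unless `e^s = 1`; having `z ≡ 0` for both
roots `±s` forces `u ≡ 0`. So a nonzero periodic solution needs `s = 2πin`, i.e.
`λ² = (2πn)² + ε²`, and for such `λ` the real part of `e^{2πint}` times an eigenvector of `P_λ`
is one.
-/

open Complex

theorem eq_mul_exp_of_hasDerivAt {v : ℝ → ℂ} {s : ℂ} (hv : ∀ t, HasDerivAt v (s * v t) t)
    (t : ℝ) : v t = v 0 * exp (s * t) := by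
  have hconst : ∀ t : ℝ, HasDerivAt (fun t : ℝ => v t * exp (-s * t)) 0 t := fun t => by
    refine ((hv t).mul ((hasDerivAt_id t).ofReal_comp.const_mul (-s)).cexp).congr_deriv ?_
    simp only [id, ofReal_one]
    ring
  have h := is_const_of_deriv_eq_zero (fun t => (hconst t).differentiableAt)
    (fun t => (hconst t).deriv) t 0
  simp only [ofReal_zero, mul_zero, exp_zero, mul_one] at h
  rw [← h, mul_assoc, ← exp_add, neg_mul, neg_add_cancel, exp_zero, mul_one]

theorem eq_zero_of_hasDerivAt_mul_of_periodic {v : ℝ → ℂ} {s : ℂ}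
    (hv : ∀ t, HasDerivAt v (s * v t) t) (hs : exp s ≠ 1) (hper : v 0 = v 1) (t : ℝ) :
    v t = 0 := by
  have h0 : v 0 = 0 := by
    have h1 := eq_mul_exp_of_hasDerivAt hv 1
    rw [← hper, ofReal_one, mul_one] at h1
    have : v 0 * (exp s - 1) = 0 := by linear_combination -h1
    exact (mul_eq_zero.1 this).resolve_right (sub_ne_zero.2 hs)
  rw [eq_mul_exp_of_hasDerivAt hv t, h0, zero_mul]

theorem eq_zero_of_hasDerivAt_of_hasDerivAt_mul_of_periodic {u u' : ℝ → ℝ} {c : ℝ} {s : ℂ}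
    (hs2 : s ^ 2 = c) (hs : exp s ≠ 1)
    (hu : ∀ t, HasDerivAt u (u' t) t) (hu' : ∀ t, HasDerivAt u' (c * u t) t)
    (hper : u 0 = u 1) (hper' : u' 0 = u' 1) (t : ℝ) : u t = 0 := by
  -- `u' + σ u` solves `z' = σ z` whenever `σ ^ 2 = c`.
  have key : ∀ σ : ℂ, σ ^ 2 = c → exp σ ≠ 1 → (u' t : ℂ) + σ * u t = 0 := fun σ hσ2 hσ =>
    eq_zero_of_hasDerivAt_mul_of_periodic (v := fun t => (u' t : ℂ) + σ * u t)
      (fun t => by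
        refine ((hu' t).ofReal_comp.add ((hu t).ofReal_comp.const_mul σ)).congr_deriv ?_
        push_cast
        rw [← hσ2]
        ring)
      hσ (by simp only [hper, hper']) t
  have hs0 : s ≠ 0 := by rintro rfl; exact hs exp_zero
  have hneg : exp (-s) ≠ 1 := by rwa [exp_neg, inv_ne_one]
  have h : 2 * s * u t = 0 := by
    linear_combination key s hs2 hs - key (-s) (by rw [neg_sq, hs2]) hneg
  simpa [hs0] using h

theorem eq_zero_of_traceless_system_of_periodic {f₁ f₂ : ℝ → ℝ} {a b c : ℝ} {s : ℂ}
    (hs2 : s ^ 2 = a ^ 2 + b * c) (hs : exp s ≠ 1)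
    (hf₁ : ∀ t, HasDerivAt f₁ (a * f₁ t + b * f₂ t) t)
    (hf₂ : ∀ t, HasDerivAt f₂ (c * f₁ t - a * f₂ t) t)
    (hper₁ : f₁ 0 = f₁ 1) (hper₂ : f₂ 0 = f₂ 1) (t : ℝ) : f₁ t = 0 ∧ f₂ t = 0 := by
  have hs2' : s ^ 2 = ((a ^ 2 + b * c : ℝ) : ℂ) := by push_cast; exact hs2
  constructor
  · refine eq_zero_of_hasDerivAt_of_hasDerivAt_mul_of_periodic hs2' hs hf₁ (fun t => ?_)
      hper₁ (by rw [hper₁, hper₂]) t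
    refine (((hf₁ t).const_mul a).add ((hf₂ t).const_mul b)).congr_deriv ?_
    ring
  · refine eq_zero_of_hasDerivAt_of_hasDerivAt_mul_of_periodic hs2' hs hf₂ (fun t => ?_)
      hper₂ (by rw [hper₁, hper₂]) t
    refine (((hf₁ t).const_mul c).sub ((hf₂ t).const_mul a)).congr_deriv ?_
    ring

theorem exists_int_sq_eq_of_periodic_solution {ε lam : ℝ} {f₁ f₂ : ℝ → ℝ}
    (hf₁ : ∀ t, HasDerivAt f₁ (-ε * f₁ t - lam * f₂ t) t)
    (hf₂ : ∀ t, HasDerivAt f₂ (lam * f₁ t + ε * f₂ t) t)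
    (hne : ¬ ∀ t, f₁ t = 0 ∧ f₂ t = 0) (hper₁ : f₁ 0 = f₁ 1) (hper₂ : f₂ 0 = f₂ 1) :
    ∃ n : ℤ, lam ^ 2 = (2 * Real.pi * n) ^ 2 + ε ^ 2 := by
  obtain ⟨s, hs2⟩ := IsAlgClosed.exists_pow_nat_eq ((ε ^ 2 - lam ^ 2 : ℝ) : ℂ) two_pos
  have hs : exp s = 1 := by
    by_contra hs
    refine hne (eq_zero_of_traceless_system_of_periodic (a := -ε) (b := -lam) (c := lam)
      (by rw [hs2]; push_cast; ring) hs (fun t => ?_) (fun t => ?_) hper₁ hper₂)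
    · exact (hf₁ t).congr_deriv (by ring)
    · exact (hf₂ t).congr_deriv (by ring)
  obtain ⟨n, rfl⟩ := exp_eq_one_iff.1 hs
  refine ⟨n, ofReal_injective ?_⟩
  push_cast at hs2 ⊢
  linear_combination hs2 - (2 * Real.pi * n) ^ 2 * I_sq

theorem exists_periodic_solution_of_sq_eq {ε lam : ℝ} (hlam : lam ≠ 0) {n : ℤ}
    (h : lam ^ 2 = (2 * Real.pi * n) ^ 2 + ε ^ 2) :
    ∃ f₁ f₂ : ℝ → ℝ, (∀ t, HasDerivAt f₁ (-ε * f₁ t - lam * f₂ t) t) ∧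
      (∀ t, HasDerivAt f₂ (lam * f₁ t + ε * f₂ t) t) ∧
      f₁ 0 ≠ 0 ∧ f₁ 0 = f₁ 1 ∧ f₂ 0 = f₂ 1 := by
  -- the real part of `e^{iwt} (λ, -ε - iw)`, with `(λ, -ε - iw)` an eigenvector of `P_λ` for `iw`
  set w := 2 * Real.pi * n
  have hw : ∀ t, HasDerivAt (fun t : ℝ => w * t) w t := fun t => by
    simpa using (hasDerivAt_id t).const_mul w
  have hcos : Real.cos w = 1 := by
    rw [show w = n * (2 * Real.pi) by ring]; exact Real.cos_int_mul_two_pi n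
  have hsin : Real.sin w = 0 := by
    rw [show w = (2 * n : ℤ) * Real.pi by push_cast; ring]; exact Real.sin_int_mul_pi _
  refine ⟨fun t => lam * Real.cos (w * t), fun t => w * Real.sin (w * t) - ε * Real.cos (w * t),
    fun t => ?_, fun t => ?_, by simpa using hlam, by simp [hcos], by simp [hcos, hsin]⟩
  · exact (((hw t).cos).const_mul lam).congr_deriv (by ring)
  · exact ((((hw t).sin).const_mul w).sub (((hw t).cos).const_mul ε)).congr_deriv
      (by linear_combination -Real.cos (w * t) * h)

theorem exists_int_sq_eq_iff {ε lam : ℝ} :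
    (∃ n : ℤ, lam ^ 2 = (2 * Real.pi * n) ^ 2 + ε ^ 2) ↔
      (lam = ε ∨ lam = -ε ∨
        ∃ n : ℤ, n ≠ 0 ∧ (lam = Real.sqrt ((2 * Real.pi * n) ^ 2 + ε ^ 2) ∨
          lam = -Real.sqrt ((2 * Real.pi * n) ^ 2 + ε ^ 2))) := by
  have sq_eq_iff : ∀ x : ℝ, 0 ≤ x → (lam ^ 2 = x ↔ lam = √x ∨ lam = -√x) := fun x hx => by
    rw [← sq_eq_sq_iff_eq_or_eq_neg, Real.sq_sqrt hx]
  constructor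
  · rintro ⟨n, hn⟩
    rcases eq_or_ne n 0 with rfl | hn0
    · exact (sq_eq_sq_iff_eq_or_eq_neg.1 (by simpa using hn)).imp_right Or.inl
    · exact Or.inr (Or.inr ⟨n, hn0, (sq_eq_iff _ (by positivity)).1 hn⟩)
  · rintro (rfl | rfl | ⟨n, -, h⟩)
    · exact ⟨0, by simp⟩
    · exact ⟨0, by simp⟩
    · exact ⟨n, (sq_eq_iff _ (by positivity)).2 h⟩

/-- Eigenvalues of the asymptotic operator of a positive hyperbolic Reeb orbit:
there is a nonzero periodic solution of `f' = P_λ f` with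
`P_λ = ![![-ε, -λ], ![λ, ε]]` iff `λ = ±ε` or `λ = ±√((2πn)² + ε²)`, `n ≠ 0`. -/
theorem stmt_1 (ε lam : ℝ) (hε : 0 < ε) :
    (∃ f₁ f₂ : ℝ → ℝ, Differentiable ℝ f₁ ∧ Differentiable ℝ f₂ ∧
        (∀ t, deriv f₁ t = -ε * f₁ t - lam * f₂ t) ∧
        (∀ t, deriv f₂ t = lam * f₁ t + ε * f₂ t) ∧
        (¬ ∀ t, f₁ t = 0 ∧ f₂ t = 0) ∧
        f₁ 0 = f₁ 1 ∧ f₂ 0 = f₂ 1) ↔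
      (lam = ε ∨ lam = -ε ∨
        ∃ n : ℤ, n ≠ 0 ∧ (lam = Real.sqrt ((2 * Real.pi * n) ^ 2 + ε ^ 2) ∨
          lam = -Real.sqrt ((2 * Real.pi * n) ^ 2 + ε ^ 2))) := by
  rw [← exists_int_sq_eq_iff]
  constructor
  · rintro ⟨f₁, f₂, hd₁, hd₂, hf₁, hf₂, hne, hper₁, hper₂⟩
    exact exists_int_sq_eq_of_periodic_solution (fun t => hf₁ t ▸ (hd₁ t).hasDerivAt)
      (fun t => hf₂ t ▸ (hd₂ t).hasDerivAt) hne hper₁ hper₂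
  · rintro ⟨n, hn⟩
    have hlam : lam ≠ 0 := by rintro rfl; nlinarith [sq_nonneg (2 * Real.pi * n)]
    obtain ⟨f₁, f₂, hf₁, hf₂, hne, hper₁, hper₂⟩ := exists_periodic_solution_of_sq_eq hlam hn
    exact ⟨f₁, f₂, fun t => (hf₁ t).differentiableAt, fun t => (hf₂ t).differentiableAt,
      fun t => (hf₁ t).deriv, fun t => (hf₂ t).deriv, fun h => hne (h 0).1, hper₁, hper₂⟩
end

section
/- Let $\varepsilon>0$, $\lambda\in\mathbb{R}$ and $P_\lambda=\begin{pmatrix}-\varepsilon & -\lambda\\ \lambda & \varepsilon\end{pmatrix}$. There exists a nonzero solution $f:\mathbb{R}\to\mathbb{R}^2$ of $f'(t)=P_\lambda f(t)$ with $f(1)=-f(0)$ (antiperiodic boundary condition) if and only if $\lambda=\pm\sqrt{((2n-1)\pi)^2+\varepsilon^2}$ for some positive integer $n$. -/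
/-!
Since `P_λ² = κ` with `κ = ε² - λ²`, every solution is `f t = c t • f 0 + s t • P_λ (f 0)`,
where `c' = κ s`, `s' = c`, `c 0 = 1`, `s 0 = 0`. The conserved quantity `c² - κ s² = 1` shows
that the monodromy `f 0 ↦ f 1` has eigenvalue `-1` iff `c 1 = -1`. This forces `κ < 0`, where
`c 1 = cos √(λ² - ε²)`, so `√(λ² - ε²)` must be an odd multiple of `π`.
-/

open Real

/-- `cosK κ` and `sinK κ` are the fundamental solutions of `u'' = κ u`. -/
noncomputable def cosK (κ : ℝ) : ℝ → ℝ :=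
  if κ < 0 then fun t => cos (√(-κ) * t) else fun t => cosh (√κ * t)

noncomputable def sinK (κ : ℝ) : ℝ → ℝ :=
  if κ < 0 then fun t => sin (√(-κ) * t) / √(-κ)
  else if κ = 0 then id else fun t => sinh (√κ * t) / √κ

section CosK

variable {κ : ℝ}

@[simp] theorem cosK_zero (κ : ℝ) : cosK κ 0 = 1 := by
  unfold cosK; split_ifs <;> simp

@[simp] theorem sinK_zero (κ : ℝ) : sinK κ 0 = 0 := by
  unfold sinK; split_ifs <;> simp

theorem hasDerivAt_cosK (κ t : ℝ) : HasDerivAt (cosK κ) (κ * sinK κ t) t := by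
  unfold cosK sinK
  rcases lt_trichotomy κ 0 with hκ | rfl | hκ
  · simp only [if_pos hκ]
    have hω := sq_sqrt (neg_nonneg.2 hκ.le)
    have hω0 : √(-κ) ≠ 0 := (sqrt_pos.2 (neg_pos.2 hκ)).ne'
    refine ((hasDerivAt_id' t).const_mul √(-κ)).cos.congr_deriv ?_
    field_simp
    linear_combination -sin (√(-κ) * t) * hω
  · simpa using hasDerivAt_const t (1 : ℝ)
  · simp only [if_neg hκ.not_gt, if_neg hκ.ne']
    have hω := sq_sqrt hκ.le
    have hω0 : √κ ≠ 0 := (sqrt_pos.2 hκ).ne'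
    refine ((hasDerivAt_id' t).const_mul √κ).cosh.congr_deriv ?_
    field_simp
    linear_combination sinh (√κ * t) * hω

theorem hasDerivAt_sinK (κ t : ℝ) : HasDerivAt (sinK κ) (cosK κ t) t := by
  unfold cosK sinK
  rcases lt_trichotomy κ 0 with hκ | rfl | hκ
  · simp only [if_pos hκ]
    have hω0 : √(-κ) ≠ 0 := (sqrt_pos.2 (neg_pos.2 hκ)).ne'
    refine (((hasDerivAt_id' t).const_mul √(-κ)).sin.div_const √(-κ)).congr_deriv ?_
    field_simp
  · simpa using hasDerivAt_id t
  · simp only [if_neg hκ.not_gt, if_neg hκ.ne']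
    have hω0 : √κ ≠ 0 := (sqrt_pos.2 hκ).ne'
    refine (((hasDerivAt_id' t).const_mul √κ).sinh.div_const √κ).congr_deriv ?_
    field_simp

theorem cosK_sq_sub_mul_sinK_sq (κ t : ℝ) : cosK κ t ^ 2 - κ * sinK κ t ^ 2 = 1 := by
  have hderiv (t : ℝ) : HasDerivAt (fun t => cosK κ t ^ 2 - κ * sinK κ t ^ 2) 0 t := by
    refine (((hasDerivAt_cosK κ t).pow 2).sub
      (((hasDerivAt_sinK κ t).pow 2).const_mul κ)).congr_deriv ?_
    ring
  simpa using is_const_of_deriv_eq_zero (fun t => (hderiv t).differentiableAt)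
    (fun t => (hderiv t).deriv) t 0

theorem one_le_cosK (hκ : 0 ≤ κ) (t : ℝ) : 1 ≤ cosK κ t := by
  simp [cosK, hκ.not_gt]

theorem cos_eq_neg_one_iff_of_pos {ω : ℝ} (hω : 0 < ω) :
    cos ω = -1 ↔ ∃ n : ℕ, 0 < n ∧ ω = (2 * n - 1) * π := by
  rw [cos_eq_neg_one_iff]
  constructor
  · rintro ⟨k, rfl⟩
    have hk : 0 ≤ k := by
      by_contra! hk
      have : (k : ℝ) ≤ -1 := by exact_mod_cast Int.le_sub_one_of_lt hk
      nlinarith [pi_pos]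
    lift k to ℕ using hk
    exact ⟨k + 1, k.succ_pos, by push_cast; ring⟩
  · rintro ⟨n, -, rfl⟩
    exact ⟨(n : ℤ) - 1, by push_cast; ring⟩

theorem cosK_one_eq_neg_one_iff :
    cosK κ 1 = -1 ↔ ∃ n : ℕ, 0 < n ∧ κ = -((2 * n - 1) * π) ^ 2 := by
  have hpos {n : ℕ} (hn : 0 < n) : 0 < (2 * (n : ℝ) - 1) * π := by
    have : (1 : ℝ) ≤ n := by exact_mod_cast hn
    nlinarith [pi_pos]
  rcases lt_or_ge κ 0 with hκ | hκ
  · have hω : κ = -√(-κ) ^ 2 := by rw [sq_sqrt (neg_nonneg.2 hκ.le), neg_neg]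
    rw [cosK, if_pos hκ, mul_one, cos_eq_neg_one_iff_of_pos (sqrt_pos.2 (neg_pos.2 hκ))]
    refine exists_congr fun n => and_congr_right fun hn => ⟨fun h => h ▸ hω, fun h => ?_⟩
    rw [h, neg_neg, sqrt_sq (hpos hn).le]
  · refine iff_of_false (by linarith [one_le_cosK hκ 1]) ?_
    rintro ⟨n, hn, rfl⟩
    nlinarith [hpos hn]

end CosK

section LinearODE

variable {E : Type*} [NormedAddCommGroup E] [NormedSpace ℝ E] {A : E →L[ℝ] E} {κ : ℝ}

theorem eq_of_hasDerivAt_clm {F G : ℝ → E} (hF : ∀ t, HasDerivAt F (A (F t)) t)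
    (hG : ∀ t, HasDerivAt G (A (G t)) t) (h0 : F 0 = G 0) : F = G :=
  ODE_solution_unique_univ (v := fun _ => A) (s := fun _ => Set.univ) (K := ‖A‖₊)
    (fun _ => A.lipschitz.lipschitzOnWith) (fun t => ⟨hF t, trivial⟩) (fun t => ⟨hG t, trivial⟩)
    h0

theorem hasDerivAt_cosK_smul_add_sinK_smul (hA : ∀ x, A (A x) = κ • x) (x : E) (t : ℝ) :
    HasDerivAt (fun t => cosK κ t • x + sinK κ t • A x)
      (A (cosK κ t • x + sinK κ t • A x)) t := by
  refine (((hasDerivAt_cosK κ t).smul_const x).add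
    ((hasDerivAt_sinK κ t).smul_const (A x))).congr_deriv ?_
  rw [map_add, map_smul, map_smul, hA, smul_smul, mul_comm, add_comm]

theorem eq_cosK_smul_add_sinK_smul (hA : ∀ x, A (A x) = κ • x) {F : ℝ → E}
    (hF : ∀ t, HasDerivAt F (A (F t)) t) :
    F = fun t => cosK κ t • F 0 + sinK κ t • A (F 0) :=
  eq_of_hasDerivAt_clm hF (hasDerivAt_cosK_smul_add_sinK_smul hA (F 0)) (by simp)

theorem exists_antiperiodic_iff [Nontrivial E] (hA : ∀ x, A (A x) = κ • x) :
    (∃ F : ℝ → E, (∀ t, HasDerivAt F (A (F t)) t) ∧ F ≠ 0 ∧ F 1 = -F 0) ↔ cosK κ 1 = -1 := by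
  have hW := cosK_sq_sub_mul_sinK_sq κ 1
  set C := cosK κ 1
  set S := sinK κ 1
  constructor
  · rintro ⟨F, hF, hF0, hanti⟩
    have hsol := eq_cosK_smul_add_sinK_smul hA hF
    have hx : F 0 ≠ 0 := fun h => hF0 (by rw [hsol, h]; ext; simp)
    have h1 : (C + 1) • F 0 + S • A (F 0) = 0 := by
      have := congrFun hsol 1
      rw [hanti] at this
      rw [add_smul, one_smul, add_right_comm, ← this, neg_add_cancel]
    -- apply `C + 1 - S A` to `h1`
    have h2 : ((C + 1) ^ 2 - κ * S ^ 2) • F 0 = 0 := by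
      have hA1 := congrArg A h1
      rw [map_add, map_smul, map_smul, hA, map_zero] at hA1
      calc ((C + 1) ^ 2 - κ * S ^ 2) • F 0
          = (C + 1) • ((C + 1) • F 0 + S • A (F 0)) -
              S • ((C + 1) • A (F 0) + S • κ • F 0) := by module
        _ = 0 := by rw [h1, hA1, smul_zero, smul_zero, sub_zero]
    have := (smul_eq_zero.1 h2).resolve_right hx
    linear_combination (this - hW) / 2
  · intro hC
    have hκ : κ < 0 := by
      by_contra! hκ
      linarith [one_le_cosK hκ 1]
    have hS : S = 0 := by
      have : κ * S ^ 2 = 0 := by rw [hC] at hW; linarith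
      simpa [hκ.ne] using this
    obtain ⟨x, hx⟩ := exists_ne (0 : E)
    refine ⟨_, hasDerivAt_cosK_smul_add_sinK_smul hA x, fun h => hx ?_, ?_⟩
    · simpa using congrFun h 0
    · show C • x + S • A x = -(cosK κ 0 • x + sinK κ 0 • A x)
      simp [hC, hS]

end LinearODE

/-- The operator `P_λ`. -/
noncomputable def asymptoticOp (ε lam : ℝ) : ℝ × ℝ →L[ℝ] ℝ × ℝ :=
  ((-ε) • ContinuousLinearMap.fst ℝ ℝ ℝ - lam • ContinuousLinearMap.snd ℝ ℝ ℝ).prod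
    (lam • ContinuousLinearMap.fst ℝ ℝ ℝ + ε • ContinuousLinearMap.snd ℝ ℝ ℝ)

@[simp] theorem asymptoticOp_apply (ε lam : ℝ) (x : ℝ × ℝ) :
    asymptoticOp ε lam x = (-ε * x.1 - lam * x.2, lam * x.1 + ε * x.2) := by
  simp [asymptoticOp]

theorem asymptoticOp_asymptoticOp (ε lam : ℝ) (x : ℝ × ℝ) :
    asymptoticOp ε lam (asymptoticOp ε lam x) = (ε ^ 2 - lam ^ 2) • x := by
  ext <;> simp <;> ring

theorem hasDerivAt_asymptoticOp_iff {ε lam : ℝ} {f₁ f₂ : ℝ → ℝ} :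
    (∀ t, HasDerivAt (fun t => (f₁ t, f₂ t)) (asymptoticOp ε lam (f₁ t, f₂ t)) t) ↔
      Differentiable ℝ f₁ ∧ Differentiable ℝ f₂ ∧
        (∀ t, deriv f₁ t = -ε * f₁ t - lam * f₂ t) ∧
        (∀ t, deriv f₂ t = lam * f₁ t + ε * f₂ t) := by
  constructor
  · intro h
    have h₁ t := hasFDerivAt_fst.comp_hasDerivAt t (h t)
    have h₂ t := hasFDerivAt_snd.comp_hasDerivAt t (h t)
    simp only [Function.comp_def, asymptoticOp_apply] at h₁ h₂
    exact ⟨fun t => (h₁ t).differentiableAt, fun t => (h₂ t).differentiableAt,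
      fun t => (h₁ t).deriv, fun t => (h₂ t).deriv⟩
  · rintro ⟨hf₁, hf₂, hf₁', hf₂'⟩ t
    rw [asymptoticOp_apply, ← hf₁', ← hf₂']
    exact (hf₁ t).hasDerivAt.prodMk (hf₂ t).hasDerivAt

theorem exists_antiperiodic_pair_iff (ε lam : ℝ) :
    (∃ f₁ f₂ : ℝ → ℝ, Differentiable ℝ f₁ ∧ Differentiable ℝ f₂ ∧
        (∀ t, deriv f₁ t = -ε * f₁ t - lam * f₂ t) ∧
        (∀ t, deriv f₂ t = lam * f₁ t + ε * f₂ t) ∧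
        (¬ ∀ t, f₁ t = 0 ∧ f₂ t = 0) ∧ f₁ 1 = -f₁ 0 ∧ f₂ 1 = -f₂ 0) ↔
      ∃ F : ℝ → ℝ × ℝ, (∀ t, HasDerivAt F (asymptoticOp ε lam (F t)) t) ∧ F ≠ 0 ∧
        F 1 = -F 0 := by
  constructor
  · rintro ⟨f₁, f₂, hf₁, hf₂, hf₁', hf₂', hne, h₁, h₂⟩
    exact ⟨fun t => (f₁ t, f₂ t), hasDerivAt_asymptoticOp_iff.2 ⟨hf₁, hf₂, hf₁', hf₂'⟩,
      fun h => hne fun t => Prod.ext_iff.1 (congrFun h t), Prod.ext h₁ h₂⟩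
  · rintro ⟨F, hF, hne, hanti⟩
    obtain ⟨hf₁, hf₂, hf₁', hf₂'⟩ := hasDerivAt_asymptoticOp_iff.1 hF
    exact ⟨_, _, hf₁, hf₂, hf₁', hf₂', fun h => hne (funext fun t => Prod.ext (h t).1 (h t).2),
      congrArg Prod.fst hanti, congrArg Prod.snd hanti⟩

theorem stmt_2_general (ε lam : ℝ) :
    (∃ f₁ f₂ : ℝ → ℝ, Differentiable ℝ f₁ ∧ Differentiable ℝ f₂ ∧
        (∀ t, deriv f₁ t = -ε * f₁ t - lam * f₂ t) ∧
        (∀ t, deriv f₂ t = lam * f₁ t + ε * f₂ t) ∧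
        (¬ ∀ t, f₁ t = 0 ∧ f₂ t = 0) ∧
        f₁ 1 = -f₁ 0 ∧ f₂ 1 = -f₂ 0) ↔
      (∃ n : ℕ, 0 < n ∧
        (lam = Real.sqrt (((2 * n - 1) * Real.pi) ^ 2 + ε ^ 2) ∨
         lam = -Real.sqrt (((2 * n - 1) * Real.pi) ^ 2 + ε ^ 2))) := by
  rw [exists_antiperiodic_pair_iff, exists_antiperiodic_iff (asymptoticOp_asymptoticOp ε lam),
    cosK_one_eq_neg_one_iff]
  refine exists_congr fun n => and_congr_right fun _ => ?_
  rw [← sq_eq_sq_iff_eq_or_eq_neg, sq_sqrt (by positivity)]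
  constructor <;> intro h <;> linarith

/-- Eigenvalues of the asymptotic operator of a negative hyperbolic Reeb orbit:
there is a nonzero antiperiodic solution of `f' = P_λ f` iff
`λ = ±√(((2n-1)π)² + ε²)` for some positive integer `n`. -/
theorem stmt_2 (ε lam : ℝ) (hε : 0 < ε) :
    (∃ f₁ f₂ : ℝ → ℝ, Differentiable ℝ f₁ ∧ Differentiable ℝ f₂ ∧
        (∀ t, deriv f₁ t = -ε * f₁ t - lam * f₂ t) ∧
        (∀ t, deriv f₂ t = lam * f₁ t + ε * f₂ t) ∧
        (¬ ∀ t, f₁ t = 0 ∧ f₂ t = 0) ∧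
        f₁ 1 = -f₁ 0 ∧ f₂ 1 = -f₂ 0) ↔
      (∃ n : ℕ, 0 < n ∧
        (lam = Real.sqrt (((2 * n - 1) * Real.pi) ^ 2 + ε ^ 2) ∨
         lam = -Real.sqrt (((2 * n - 1) * Real.pi) ^ 2 + ε ^ 2))) :=
  stmt_2_general ε lam
end
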